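/- arXiv:1805.12454 — 2 statements merged into one kernel-verified Lean document; each statement's English description precedes it below -/
import Mathlib

section
/- Let X be a spectral space. On the set of all nonempty quasi-compact saturated subsets of X (which coincides with the set 𝒳(X) of nonempty inverse-closed subsets of X), the Zariski topology coincides with the upper Vietoris topology, i.e., the topology whose basic open sets are U⁺ := {Q : Q nonempty quasi-compact saturated, Q ⊆ U} for U ranging over all open subsets of X. -/
/-!
Since the quasi-compact opens form a basis, a quasi-compact set inside an open set `U` lies in a
quasi-compact open `Ω ⊆ U`. This makes every quasi-compact saturated set an intersection of
quasi-compact opens, and every `U⁺` the union of the `𝒰(Ω)` with `Ω ⊆ U`. Conversely, an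
intersection of quasi-compact opens is closed in the constructible topology, which is compact on a
spectral space and finer than the original topology, so it is quasi-compact.
-/

open Set TopologicalSpace Topology

/-- A subset of a topological space is *inverse-closed* if it is an intersection of a
family of quasi-compact open subsets. -/
def InvClosed {X : Type*} [TopologicalSpace X] (Y : Set X) : Prop :=
  ∃ 𝒪 : Set (Set X), (∀ U ∈ 𝒪, IsOpen U ∧ IsCompact U) ∧ Y = ⋂₀ 𝒪

/-- A subset is *saturated* if it is an intersection of open sets. -/
def IsSatd {X : Type*} [TopologicalSpace X] (Y : Set X) : Prop :=
  ∃ 𝒪 : Set (Set X), (∀ U ∈ 𝒪, IsOpen U) ∧ Y = ⋂₀ 𝒪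

/-- A topological space is *spectral* if it is T0, quasi-compact, sober, and the
quasi-compact open subsets form a basis closed under finite intersections. -/
def IsSpectralSpace (X : Type*) [TopologicalSpace X] : Prop :=
  T0Space X ∧ CompactSpace X ∧ QuasiSober X ∧
    IsTopologicalBasis {U : Set X | IsOpen U ∧ IsCompact U} ∧
    ∀ U V : Set X, IsOpen U → IsCompact U → IsOpen V → IsCompact V → IsCompact (U ∩ V)

/-- `𝒳(X)`: the nonempty inverse-closed subsets of `X`. -/
abbrev XCal (X : Type*) [TopologicalSpace X] : Type _ :=
  {Y : Set X // Y.Nonempty ∧ InvClosed Y}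

/-- The Zariski topology on `𝒳(X)`, with basic open sets `𝒰(Ω) = {Y : Y ⊆ Ω}` for `Ω`
quasi-compact open in `X`. -/
instance XCal.instTop (X : Type*) [TopologicalSpace X] : TopologicalSpace (XCal X) :=
  generateFrom {S : Set (XCal X) | ∃ Ω : Set X, IsOpen Ω ∧ IsCompact Ω ∧
    S = {Y : XCal X | (Y : Set X) ⊆ Ω}}

/-- The specialization-type order: `x ≤ y` iff `y ∈ closure {x}`. -/
def spord {X : Type*} [TopologicalSpace X] (x y : X) : Prop := y ∈ closure {x}

/-- Closure under generizations of a set `S`: all points `z ≤ s` for some `s ∈ S`. -/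
def genOf {X : Type*} [TopologicalSpace X] (S : Set X) : Set X :=
  {z : X | ∃ s ∈ S, spord z s}

/-- A map is *spectral* if preimages of quasi-compact open sets are quasi-compact open. -/
def SpecMap {X Y : Type*} [TopologicalSpace X] [TopologicalSpace Y] (f : X → Y) : Prop :=
  ∀ Ω : Set Y, IsOpen Ω → IsCompact Ω → IsOpen (f ⁻¹' Ω) ∧ IsCompact (f ⁻¹' Ω)

/-- The constructible topology on a spectral space: generated by the quasi-compact open
sets together with their complements. -/
def constructibleTop (X : Type*) [TopologicalSpace X] : TopologicalSpace X :=
  generateFrom ({U : Set X | IsOpen U ∧ IsCompact U} ∪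
    {S : Set X | ∃ U : Set X, IsOpen U ∧ IsCompact U ∧ S = Uᶜ})

/-- `s` is the supremum of `S` for the order induced by the topology. -/
def IsSupOf {X : Type*} [TopologicalSpace X] (S : Set X) (s : X) : Prop :=
  (∀ c ∈ S, spord c s) ∧ ∀ t : X, (∀ c ∈ S, spord c t) → spord s t

/-- A map is sup-preserving if it sends existing finite suprema to suprema. -/
def SupPreserving {X Y : Type*} [TopologicalSpace X] [TopologicalSpace Y] (f : X → Y) : Prop :=
  ∀ F : Set X, F.Finite → ∀ s : X, IsSupOf F s → IsSupOf (f '' F) (f s)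

/-- A map is open onto its image. -/
def OpenOntoImage {X Y : Type*} [TopologicalSpace X] [TopologicalSpace Y] (f : X → Y) : Prop :=
  ∀ V : Set X, IsOpen V → ∃ W : Set Y, IsOpen W ∧ f '' V = W ∩ Set.range f

/-- The upper Vietoris topology on `𝒳(X)`: basic open sets are
`U⁺ = {Q : Q ⊆ U}` for `U` open in `X`. -/
def upperVietorisTop (X : Type*) [TopologicalSpace X] : TopologicalSpace (XCal X) :=
  generateFrom {S : Set (XCal X) | ∃ U : Set X, IsOpen U ∧
    S = {Q : XCal X | (Q : Set X) ⊆ U}}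

lemma IsSpectralSpace.spectralSpace {X : Type*} [TopologicalSpace X] (hX : IsSpectralSpace X) :
    SpectralSpace X :=
  have ⟨_, _, _, hbasis, hinter⟩ := hX
  { isTopologicalBasis := hbasis
    inter_isCompact := hinter }

lemma InvClosed.isSatd {X : Type*} [TopologicalSpace X] {Y : Set X} (hY : InvClosed Y) :
    IsSatd Y :=
  have ⟨𝒪, h𝒪, hY⟩ := hY
  ⟨𝒪, fun U hU => (h𝒪 U hU).1, hY⟩

lemma IsSatd.invClosed_of_isCompact {X : Type*} [TopologicalSpace X] [PrespectralSpace X]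
    {Y : Set X} (hY : IsSatd Y) (hc : IsCompact Y) : InvClosed Y := by
  obtain ⟨𝒪, h𝒪, rfl⟩ := hY
  refine ⟨{Ω | (IsOpen Ω ∧ IsCompact Ω) ∧ ⋂₀ 𝒪 ⊆ Ω}, fun Ω hΩ => hΩ.1, ?_⟩
  refine subset_antisymm (fun x hx => mem_sInter.2 fun Ω hΩ => hΩ.2 hx) fun x hx => ?_
  refine mem_sInter.2 fun U hU => ?_
  obtain ⟨Ω, hΩc, hΩo, hYΩ, hΩU⟩ :=
    PrespectralSpace.exists_isCompact_and_isOpen_between hc (h𝒪 U hU) (sInter_subset_of_mem hU)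
  exact hΩU (mem_sInter.1 hx Ω ⟨⟨hΩo, hΩc⟩, hYΩ⟩)

lemma WithConstructibleTopology.continuous_ofTopology {X : Type*} [TopologicalSpace X]
    [PrespectralSpace X] :
    Continuous (WithTopology.ofTopology : WithConstructibleTopology X → X) :=
  PrespectralSpace.isTopologicalBasis.continuous_iff.2 fun _ ⟨hΩo, hΩc⟩ =>
    WithConstructibleTopology.isOpen_iff.2 (hΩc.isOpen_constructibleTopology_of_isOpen hΩo)

lemma IsCompact.isClosed_constructibleTopology_of_isOpen {X : Type*} [TopologicalSpace X]
    {U : Set X} (hc : IsCompact U) (ho : IsOpen U) : IsClosed[constructibleTopology X] U :=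
  (@isOpen_compl_iff _ _ (constructibleTopology X)).1 <|
    IsCompact.isOpen_constructibleTopology_of_isClosed (by rwa [compl_compl]) ho.isClosed_compl

lemma InvClosed.isCompact {X : Type*} [TopologicalSpace X] [SpectralSpace X] {Y : Set X}
    (hY : InvClosed Y) : IsCompact Y := by
  obtain ⟨𝒪, h𝒪, rfl⟩ := hY
  have hclosed : IsClosed (WithTopology.ofTopology ⁻¹' ⋂₀ 𝒪 : Set (WithConstructibleTopology X)) :=
    WithConstructibleTopology.isClosed_iff.2 <| @isClosed_sInter _ (constructibleTopology X) _
      fun U hU => (h𝒪 U hU).2.isClosed_constructibleTopology_of_isOpen (h𝒪 U hU).1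
  simpa only [image_preimage_eq _ (WithTopology.ofTopology_surjective _)] using
    hclosed.isCompact.image WithConstructibleTopology.continuous_ofTopology

lemma XCal.isOpen_setOf_subset {X : Type*} [TopologicalSpace X] [SpectralSpace X] {U : Set X}
    (hU : IsOpen U) : IsOpen {Q : XCal X | (Q : Set X) ⊆ U} := by
  refine isOpen_iff_forall_mem_open.2 fun Q hQU => ?_
  obtain ⟨Ω, hΩc, hΩo, hQΩ, hΩU⟩ :=
    PrespectralSpace.exists_isCompact_and_isOpen_between Q.2.2.isCompact hU hQU
  exact ⟨{Q | (Q : Set X) ⊆ Ω}, fun _ h => h.trans hΩU,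
    isOpen_generateFrom_of_mem ⟨Ω, hΩo, hΩc, rfl⟩, hQΩ⟩

/-- In a spectral space, the nonempty quasi-compact saturated subsets
are exactly the nonempty inverse-closed subsets, and on `𝒳(X)` the Zariski
topology coincides with the upper Vietoris topology. -/
theorem stmt3 {X : Type*} [TopologicalSpace X] (hX : IsSpectralSpace X) :
    {Y : Set X | Y.Nonempty ∧ IsCompact Y ∧ IsSatd Y} =
      {Y : Set X | Y.Nonempty ∧ InvClosed Y} ∧
    XCal.instTop X = upperVietorisTop X := by
  have := hX.spectralSpace
  refine ⟨?_, le_antisymm ?_ ?_⟩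
  · ext Y
    exact ⟨fun ⟨hne, hc, hs⟩ => ⟨hne, hs.invClosed_of_isCompact hc⟩,
      fun ⟨hne, hi⟩ => ⟨hne, hi.isCompact, hi.isSatd⟩⟩
  · exact le_generateFrom fun _ ⟨U, hU, hS⟩ => hS ▸ XCal.isOpen_setOf_subset hU
  · exact generateFrom_anti fun _ ⟨Ω, hΩo, _, hS⟩ => ⟨Ω, hΩo, hS⟩
end

section
/- Let X be a spectral space and φ : X → 𝒳(X) the canonical embedding x ↦ {x}^gen. Then φ is surjective (i.e., φ(X) = 𝒳(X)) if and only if the specialization order ≤ on X is a total (linear) order. -/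
open Set TopologicalSpace Topology

/-!
A nonempty inverse-closed set `Y = ⋂₀ 𝒪` is of the form `{ξ}^gen` exactly when it has a most
special point `ξ`. If the specialization order is total, the sets `closure {y}` for `y ∈ Y`
form a chain, so by compactness `X` and each `U ∈ 𝒪` meet their intersection `C`; every
subset of a totally ordered space is preirreducible, so `C` has a generic point `ξ`, which then
lies in each `U` and is a specialization of every point of `Y`. Conversely, `{x, y}^gen` is
inverse-closed because the quasi-compact opens form a basis, and if it equals `{z}^gen` then
`z` lies above both `x` and `y` and below one of them.
-/

section

variable {X : Type*} [TopologicalSpace X]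

theorem spord_iff_specializes {x y : X} : spord x y ↔ x ⤳ y :=
  specializes_iff_mem_closure.symm

theorem mem_genOf_iff {S : Set X} {z : X} : z ∈ genOf S ↔ ∃ s ∈ S, z ⤳ s := by
  simp only [genOf, mem_ofPred_eq, spord_iff_specializes]

theorem mem_genOf_singleton_iff {x z : X} : z ∈ genOf {x} ↔ z ⤳ x := by
  simp only [mem_genOf_iff, exists_eq_left, mem_singleton_iff]

theorem subset_genOf (S : Set X) : S ⊆ genOf S := fun x hx =>
  mem_genOf_iff.mpr ⟨x, hx, specializes_refl x⟩

theorem genOf_eq_sInter_of_finite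
    (hB : IsTopologicalBasis {U : Set X | IsOpen U ∧ IsCompact U}) {S : Set X} (hS : S.Finite) :
    genOf S = ⋂₀ {U : Set X | (IsOpen U ∧ IsCompact U) ∧ S ⊆ U} := by
  ext z
  simp only [mem_genOf_iff, mem_sInter, mem_ofPred_eq]
  constructor
  · rintro ⟨s, hs, hzs⟩ U ⟨⟨hUo, -⟩, hSU⟩
    exact hzs.mem_open hUo (hSU hs)
  · intro hz
    by_contra! hzS
    have hsep : ∀ s ∈ S, ∃ V : Set X, (IsOpen V ∧ IsCompact V) ∧ s ∈ V ∧ z ∉ V := by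
      intro s hs
      obtain ⟨O, hO, hsO, hzO⟩ := by
        simpa [specializes_iff_forall_open] using hzS s hs
      obtain ⟨V, hV, hsV, hVO⟩ := hB.exists_subset_of_mem_open hsO hO
      exact ⟨V, hV, hsV, fun hzV => hzO (hVO hzV)⟩
    choose! V hV hsV hzV using hsep
    have hU : IsOpen (⋃ s ∈ S, V s) ∧ IsCompact (⋃ s ∈ S, V s) :=
      ⟨isOpen_biUnion fun s hs => (hV s hs).1, hS.isCompact_biUnion fun s hs => (hV s hs).2⟩
    obtain ⟨s, hs, hzVs⟩ :=
      mem_iUnion₂.mp (hz _ ⟨hU, fun s hs => mem_biUnion hs (hsV s hs)⟩)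
    exact hzV s hs hzVs

theorem specializes_total_of_genOf_pair_eq {x y z : X} (h : genOf {x, y} = genOf {z}) :
    x ⤳ y ∨ y ⤳ x := by
  have hxz : x ⤳ z := mem_genOf_singleton_iff.mp (h ▸ subset_genOf _ (mem_insert x {y}))
  have hyz : y ⤳ z := mem_genOf_singleton_iff.mp (h ▸ subset_genOf _ (mem_insert_of_mem x rfl))
  have hz : z ∈ genOf {x, y} := h ▸ subset_genOf _ rfl
  obtain ⟨s, hs, hzs⟩ := mem_genOf_iff.mp hz
  rcases hs with rfl | rfl
  · exact .inr (hyz.trans hzs)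
  · exact .inl (hxz.trans hzs)

section Total

variable (htot : ∀ x y : X, x ⤳ y ∨ y ⤳ x)
include htot

theorem isPreirreducible_of_specializes_total (S : Set X) : IsPreirreducible S := by
  rintro u v hu hv ⟨a, haS, hau⟩ ⟨b, hbS, hbv⟩
  rcases htot a b with hab | hba
  · exact ⟨a, haS, hau, hab.mem_open hv hbv⟩
  · exact ⟨b, hbS, hba.mem_open hu hau, hbv⟩

theorem IsCompact.inter_iInter_closure_nonempty {Y U : Set X} (hU : IsCompact U)
    [Nonempty Y] (hYU : Y ⊆ U) : (U ∩ ⋂ y : Y, closure {(y : X)}).Nonempty := by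
  have : IsTrans X (· ⤳ ·) := ⟨fun _ _ _ => Specializes.trans⟩
  have hdir : Directed (· ⤳ ·) (fun y : Y => (y : X)) := fun a b =>
    (htot a b).elim (fun h => ⟨b, h, specializes_refl _⟩)
      fun h => ⟨a, specializes_refl _, h⟩
  refine hU.inter_iInter_nonempty _ (fun _ => isClosed_closure) fun u => ?_
  obtain ⟨z, hz⟩ := hdir.finset_le u
  exact ⟨z, hYU z.2, mem_iInter₂.mpr fun y hy => specializes_iff_mem_closure.mp (hz y hy)⟩

theorem exists_forall_specializes_of_invClosed [CompactSpace X] [QuasiSober X] {Y : Set X}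
    (hne : Y.Nonempty) (hY : InvClosed Y) : ∃ ξ ∈ Y, ∀ y ∈ Y, y ⤳ ξ := by
  obtain ⟨𝒪, h𝒪, rfl⟩ := hY
  have := hne.to_subtype
  set C := ⋂ y : ⋂₀ 𝒪, closure {(y : X)}
  have hC : IsIrreducible C :=
    ⟨(isCompact_univ.inter_iInter_closure_nonempty htot (subset_univ (⋂₀ 𝒪))).mono
        inter_subset_right,
      isPreirreducible_of_specializes_total htot C⟩
  obtain ⟨ξ, hξ⟩ := QuasiSober.sober hC (isClosed_iInter fun _ => isClosed_closure)
  refine ⟨ξ, fun U hU => ?_, fun y hy => specializes_iff_mem_closure.mpr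
    (mem_iInter.mp hξ.mem ⟨y, hy⟩)⟩
  obtain ⟨z, hzU, hzC⟩ :=
    (h𝒪 U hU).2.inter_iInter_closure_nonempty htot (sInter_subset_of_mem hU)
  exact (hξ.specializes hzC).mem_open (h𝒪 U hU).1 hzU

theorem exists_genOf_singleton_eq_of_invClosed [CompactSpace X] [QuasiSober X] {Y : Set X}
    (hne : Y.Nonempty) (hY : InvClosed Y) : ∃ ξ, genOf {ξ} = Y := by
  obtain ⟨ξ, hξY, hξ⟩ := exists_forall_specializes_of_invClosed htot hne hY
  obtain ⟨𝒪, h𝒪, rfl⟩ := hY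
  refine ⟨ξ, Subset.antisymm (fun z hz U hU => ?_) fun y hy =>
    mem_genOf_singleton_iff.mpr (hξ y hy)⟩
  exact (mem_genOf_singleton_iff.mp hz).mem_open (h𝒪 U hU).1 (hξY U hU)

end Total

end

/-- The canonical embedding `φ : X → 𝒳(X)`, `x ↦ {x}^gen`, is
surjective iff the specialization order on `X` is total. -/
theorem stmt10 {X : Type*} [TopologicalSpace X] (hX : IsSpectralSpace X)
    (φ : X → XCal X) (hφ : ∀ x : X, (φ x : Set X) = genOf {x}) :
    Function.Surjective φ ↔ ∀ x y : X, spord x y ∨ spord y x := by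
  obtain ⟨-, _, _, hbasis, -⟩ := hX
  simp only [spord_iff_specializes]
  constructor
  · intro hsurj x y
    have hinv : InvClosed (genOf {x, y}) :=
      ⟨_, fun _ hU => hU.1, genOf_eq_sInter_of_finite hbasis (toFinite _)⟩
    obtain ⟨z, hz⟩ := hsurj ⟨genOf {x, y}, ⟨x, subset_genOf _ (mem_insert x {y})⟩, hinv⟩
    exact specializes_total_of_genOf_pair_eq (by rw [← hφ z, hz])
  · intro htot Y
    obtain ⟨ξ, hξ⟩ := exists_genOf_singleton_eq_of_invClosed htot Y.2.1 Y.2.2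
    exact ⟨ξ, Subtype.ext ((hφ ξ).trans hξ)⟩
end
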